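/- Under the perturbed basic Cholesky-QR model, if κ(A)²γ₂ < 1, where γ₁ ≡ (1+ε_A)²(ε₁ + (1+ε₁)ε₂ + 2ε₃ + ε₃²) and γ₂ ≡ 2ε_A + ε_A² + (1+ε_A)²(ε₁ + (1+ε₁)ε₂), and if Ĝ + E₂ = R̂ᵀR̂ with R̂ ∈ ℝ^{n×n} and Q̂R̂ = (A+E) + E₃, then ‖Iₙ − Q̂ᵀQ̂‖₂ ≤ κ(A)²γ₁ / (1 − κ(A)²γ₂). -/

import Mathlib

open Matrix

/-- Spectral (two-)norm of a real matrix. -/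
noncomputable def spec {m n : ℕ} (M : Matrix (Fin m) (Fin n) ℝ) : ℝ :=
  ‖LinearMap.toContinuousLinearMap (Matrix.toEuclideanLin M)‖

/-- Singular values of a real `m × n` matrix, in decreasing order:
`singularValues M i` is `σ_{i+1}(M)` (0-based). -/
noncomputable def singularValues {m n : ℕ} (M : Matrix (Fin m) (Fin n) ℝ) : Fin n → ℝ :=
  fun i =>
    Real.sqrt (((show (Mᵀ * M).IsHermitian by simpa using Matrix.isHermitian_conjTranspose_mul_self M).eigenvalues ∘
      ⇑(Tuple.sort (show (Mᵀ * M).IsHermitian by simpa using Matrix.isHermitian_conjTranspose_mul_self M).eigenvalues)) i.rev)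

/-- Two-norm condition number `κ(M) = σ₁(M)/σₙ(M)`. -/
noncomputable def kappa {m n : ℕ} (M : Matrix (Fin m) (Fin n) ℝ) : ℝ :=
  if h : 0 < n then
    singularValues M ⟨0, h⟩ / singularValues M ⟨n - 1, Nat.sub_lt h Nat.one_pos⟩
  else 1

/-- Smallest singular value `σₙ(M)`. -/
noncomputable def sigmaMin {m n : ℕ} (M : Matrix (Fin m) (Fin n) ℝ) : ℝ :=
  if h : 0 < n then singularValues M ⟨n - 1, Nat.sub_lt h Nat.one_pos⟩ else 1

/-- Eigenvalues of a real symmetric matrix in decreasing order: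
`symmEigs M j` is `λ_{j+1}(M)` (0-based). -/
noncomputable def symmEigs {n : ℕ} (M : Matrix (Fin n) (Fin n) ℝ) : Fin n → ℝ :=
  fun j =>
    if h : M.IsHermitian then (h.eigenvalues ∘ ⇑(Tuple.sort h.eigenvalues)) j.rev else 0

/-!
With `B = A + E`, the computed factors satisfy `R̂ᵀR̂ = BᵀB + E₁ + E₂` and `Q̂R̂ = B + E₃`, so
`R̂ᵀR̂ - AᵀA` has norm at most `γ₂‖A‖²` and `R̂ᵀR̂ - (Q̂R̂)ᵀ(Q̂R̂)` has norm at most `γ₁‖A‖²`.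
Since `‖Ax‖ ≥ σₙ(A)‖x‖`, the first bound gives `‖R̂x‖² ≥ (σₙ(A)² - γ₂‖A‖²)‖x‖²`, which is
positive by `κ(A)²γ₂ < 1`; hence `R̂` is invertible with `‖R̂⁻¹‖² ≤ 1 / (σₙ(A)² - γ₂‖A‖²)`.
Finally `I - Q̂ᵀQ̂ = R̂⁻ᵀ (R̂ᵀR̂ - (Q̂R̂)ᵀ(Q̂R̂)) R̂⁻¹`, and dividing numerator and denominator
by `σₙ(A)²` turns `γ₁‖A‖² / (σₙ(A)² - γ₂‖A‖²)` into the claimed bound.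
-/

open scoped Matrix.Norms.L2Operator RealInnerProductSpace

lemma spec_eq_l2_opNorm {m n : ℕ} (M : Matrix (Fin m) (Fin n) ℝ) : spec M = ‖M‖ := rfl

namespace Tuple

variable {α : Type*} [LinearOrder α] {n : ℕ}

lemma comp_sort_zero_le (f : Fin n → α) (hn : 0 < n) (j : Fin n) :
    (f ∘ sort f) ⟨0, hn⟩ ≤ f j := by
  simpa using monotone_sort f (Fin.mk_le_of_le_val (Nat.zero_le _) : ⟨0, hn⟩ ≤ (sort f).symm j)

lemma le_comp_sort_last (f : Fin n → α) (hn : 0 < n) (j : Fin n) :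
    f j ≤ (f ∘ sort f) ⟨n - 1, Nat.sub_lt hn Nat.one_pos⟩ := by
  simpa using monotone_sort f (Fin.le_def.mpr (Nat.le_sub_one_of_lt ((sort f).symm j).isLt) :
    (sort f).symm j ≤ ⟨n - 1, Nat.sub_lt hn Nat.one_pos⟩)

end Tuple

namespace Matrix

lemma mulVec_injective_of_rank_eq_card {K m n : Type*} [Field K] [Fintype n] (A : Matrix m n K)
    (hA : A.rank = Fintype.card n) : Function.Injective A.mulVec := by
  have h := LinearMap.finrank_range_add_finrank_ker A.mulVecLin
  rw [Module.finrank_fintype_fun_eq_card, ← rank, hA, Nat.add_eq_left,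
    Submodule.finrank_eq_zero, LinearMap.ker_eq_bot] at h
  exact h

lemma isHermitian_transpose_mul_self {m n : Type*} [Fintype m] (M : Matrix m n ℝ) :
    (Mᵀ * M).IsHermitian := by
  simpa using isHermitian_conjTranspose_mul_self M

variable {m n : Type*} [Fintype m] [Fintype n] [DecidableEq n]

lemma eigenvalues_transpose_mul_self_nonneg (M : Matrix m n ℝ) (j : n) :
    0 ≤ (isHermitian_transpose_mul_self M).eigenvalues j := by
  have h := posSemidef_conjTranspose_mul_self M
  rw [conjTranspose_eq_transpose_of_trivial] at h
  exact h.eigenvalues_nonneg j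

lemma l2_opNorm_toEuclideanLin_le (M : Matrix m n ℝ) (x : EuclideanSpace ℝ n) :
    ‖toEuclideanLin M x‖ ≤ ‖M‖ * ‖x‖ :=
  l2_opNorm_mulVec M x

lemma l2_opNorm_le_bound (M : Matrix m n ℝ) {C : ℝ} (hC : 0 ≤ C)
    (h : ∀ x, ‖toEuclideanLin M x‖ ≤ C * ‖x‖) : ‖M‖ ≤ C :=
  ContinuousLinearMap.opNorm_le_bound _ hC h

lemma l2_opNorm_transpose_mul_self (M : Matrix m n ℝ) : ‖Mᵀ * M‖ = ‖M‖ ^ 2 := by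
  simpa [sq] using l2_opNorm_conjTranspose_mul_self M

lemma abs_inner_toEuclideanLin_self_le (M : Matrix n n ℝ) (x : EuclideanSpace ℝ n) :
    |⟪x, toEuclideanLin M x⟫| ≤ ‖M‖ * ‖x‖ ^ 2 :=
  calc |⟪x, toEuclideanLin M x⟫| ≤ ‖x‖ * ‖toEuclideanLin M x‖ := abs_real_inner_le_norm _ _
    _ ≤ ‖x‖ * (‖M‖ * ‖x‖) := by gcongr; exact l2_opNorm_toEuclideanLin_le M x
    _ = ‖M‖ * ‖x‖ ^ 2 := by ring

section Transpose

variable [DecidableEq m]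

lemma l2_opNorm_transpose (M : Matrix m n ℝ) : ‖Mᵀ‖ = ‖M‖ := by
  simpa using l2_opNorm_conjTranspose M

lemma norm_toEuclideanLin_sq (M : Matrix m n ℝ) (x : EuclideanSpace ℝ n) :
    ‖toEuclideanLin M x‖ ^ 2 = ⟪x, toEuclideanLin (Mᵀ * M) x⟫ := by
  rw [← real_inner_self_eq_norm_sq, toLpLin_mul 2 2 2, LinearMap.comp_apply,
    ← conjTranspose_eq_transpose_of_trivial, toEuclideanLin_conjTranspose_eq_adjoint,
    LinearMap.adjoint_inner_right]

lemma l2_opNorm_transpose_mul_self_add_sub_le (X Y : Matrix m n ℝ) :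
    ‖(X + Y)ᵀ * (X + Y) - Xᵀ * X‖ ≤ 2 * ‖X‖ * ‖Y‖ + ‖Y‖ ^ 2 := by
  have h : (X + Y)ᵀ * (X + Y) - Xᵀ * X = Xᵀ * Y + Yᵀ * X + Yᵀ * Y := by
    simp only [transpose_add, Matrix.add_mul, Matrix.mul_add]; abel
  rw [h]
  calc ‖Xᵀ * Y + Yᵀ * X + Yᵀ * Y‖ ≤ ‖Xᵀ‖ * ‖Y‖ + ‖Yᵀ‖ * ‖X‖ + ‖Yᵀ‖ * ‖Y‖ := by
        grw [norm_add₃_le, l2_opNorm_mul, l2_opNorm_mul, l2_opNorm_mul]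
    _ = 2 * ‖X‖ * ‖Y‖ + ‖Y‖ ^ 2 := by simp only [l2_opNorm_transpose]; ring

end Transpose

namespace IsHermitian

variable {H : Matrix n n ℝ}

lemma toEuclideanLin_eigenvectorBasis (hH : H.IsHermitian) (j : n) :
    toEuclideanLin H (hH.eigenvectorBasis j) = hH.eigenvalues j • hH.eigenvectorBasis j := by
  ext i
  simpa using congrFun (hH.mulVec_eigenvectorBasis j) i

lemma inner_toEuclideanLin_self (hH : H.IsHermitian) (x : EuclideanSpace ℝ n) :
    ⟪x, toEuclideanLin H x⟫ = ∑ j, hH.eigenvalues j * ⟪hH.eigenvectorBasis j, x⟫ ^ 2 := by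
  rw [← hH.eigenvectorBasis.sum_inner_mul_inner x]
  refine Finset.sum_congr rfl fun j _ => ?_
  rw [← isSymmetric_toEuclideanLin_iff.mpr hH, hH.toEuclideanLin_eigenvectorBasis,
    real_inner_smul_left, real_inner_comm x]
  ring

lemma mul_norm_sq_le_inner_toEuclideanLin_self (hH : H.IsHermitian) {c : ℝ}
    (hc : ∀ j, c ≤ hH.eigenvalues j) (x : EuclideanSpace ℝ n) :
    c * ‖x‖ ^ 2 ≤ ⟪x, toEuclideanLin H x⟫ := by
  rw [hH.inner_toEuclideanLin_self, ← hH.eigenvectorBasis.sum_sq_inner_right, Finset.mul_sum]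
  gcongr with j
  exact hc j

lemma inner_toEuclideanLin_self_le_mul_norm_sq (hH : H.IsHermitian) {C : ℝ}
    (hC : ∀ j, hH.eigenvalues j ≤ C) (x : EuclideanSpace ℝ n) :
    ⟪x, toEuclideanLin H x⟫ ≤ C * ‖x‖ ^ 2 := by
  rw [hH.inner_toEuclideanLin_self, ← hH.eigenvectorBasis.sum_sq_inner_right, Finset.mul_sum]
  gcongr with j
  exact hC j

end IsHermitian

section Inverse

variable {R : Matrix n n ℝ} {c : ℝ}

lemma isUnit_of_mul_norm_le (hc : 0 < c) (h : ∀ x, c * ‖x‖ ≤ ‖toEuclideanLin R x‖) :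
    IsUnit R := by
  refine mulVec_injective_iff_isUnit.mp fun x y hxy => ?_
  have hx := h (WithLp.toLp 2 (x - y))
  rw [toLpLin_toLp, toLin'_apply, mulVec_sub, hxy, sub_self, WithLp.toLp_zero, norm_zero] at hx
  have : ‖WithLp.toLp 2 (x - y)‖ = 0 := by nlinarith [norm_nonneg (WithLp.toLp 2 (x - y))]
  simpa [sub_eq_zero] using this

lemma l2_opNorm_nonsing_inv_le (hc : 0 < c) (h : ∀ x, c * ‖x‖ ≤ ‖toEuclideanLin R x‖) :
    ‖R⁻¹‖ ≤ c⁻¹ := by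
  have hR : R * R⁻¹ = 1 :=
    mul_nonsing_inv R <| (isUnit_iff_isUnit_det R).mp <| isUnit_of_mul_norm_le hc h
  refine l2_opNorm_le_bound _ (inv_nonneg.mpr hc.le) fun y => ?_
  have hy : toEuclideanLin R (toEuclideanLin R⁻¹ y) = y := by
    rw [← LinearMap.comp_apply, ← toLpLin_mul, hR, toLpLin_one, LinearMap.id_apply]
  rw [inv_mul_eq_div, le_div_iff₀' hc]
  simpa [hy] using h (toEuclideanLin R⁻¹ y)

end Inverse

lemma one_sub_transpose_mul_self_eq (Q : Matrix m n ℝ) {R : Matrix n n ℝ} (hR : IsUnit R) :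
    1 - Qᵀ * Q = R⁻¹ᵀ * (Rᵀ * R - (Q * R)ᵀ * (Q * R)) * R⁻¹ := by
  have h : R * R⁻¹ = 1 := mul_nonsing_inv R ((isUnit_iff_isUnit_det R).mp hR)
  have hT : R⁻¹ᵀ * Rᵀ = 1 := by rw [← transpose_mul, h, transpose_one]
  simp only [transpose_mul, Matrix.mul_sub, Matrix.sub_mul, Matrix.mul_assoc, h, Matrix.mul_one]
  simp only [← Matrix.mul_assoc, hT, Matrix.one_mul]

lemma l2_opNorm_one_sub_transpose_mul_self_le (Q : Matrix m n ℝ) {R : Matrix n n ℝ} {c : ℝ}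
    (hc : 0 < c) (h : ∀ x, c * ‖x‖ ≤ ‖toEuclideanLin R x‖) :
    ‖1 - Qᵀ * Q‖ ≤ ‖Rᵀ * R - (Q * R)ᵀ * (Q * R)‖ / c ^ 2 := by
  have hinv := l2_opNorm_nonsing_inv_le hc h
  rw [one_sub_transpose_mul_self_eq Q (isUnit_of_mul_norm_le hc h)]
  calc _ ≤ ‖R⁻¹ᵀ‖ * ‖Rᵀ * R - (Q * R)ᵀ * (Q * R)‖ * ‖R⁻¹‖ := by
        grw [l2_opNorm_mul, l2_opNorm_mul]
    _ ≤ c⁻¹ * ‖Rᵀ * R - (Q * R)ᵀ * (Q * R)‖ * c⁻¹ := by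
        rw [l2_opNorm_transpose]; gcongr
    _ = _ := by field_simp

lemma l2_opNorm_add_le_of_relErr {B : Matrix m n ℝ} {E₁ E₂ G : Matrix n n ℝ} {ε₁ ε₂ : ℝ}
    (hG : G = Bᵀ * B + E₁) (hB : 0 < ‖B‖) (hε₁ : ε₁ = ‖E₁‖ / ‖B‖ ^ 2) (hε₂ : ε₂ = ‖E₂‖ / ‖G‖)
    (hε₁_lt : ε₁ < 1) :
    ‖E₁ + E₂‖ ≤ (ε₁ + (1 + ε₁) * ε₂) * ‖B‖ ^ 2 := by
  have hE₁ : ‖E₁‖ = ε₁ * ‖B‖ ^ 2 := by rw [hε₁, div_mul_cancel₀ _ (by positivity)]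
  have hG_le : ‖G‖ ≤ (1 + ε₁) * ‖B‖ ^ 2 := by
    grw [hG, norm_add_le, l2_opNorm_transpose_mul_self, hE₁]
    linarith
  have hG_pos : 0 < ‖G‖ := by
    have h := norm_sub_le G E₁
    rw [hG, add_sub_cancel_right, l2_opNorm_transpose_mul_self, ← hG, hE₁] at h
    nlinarith [mul_pos (sub_pos.mpr hε₁_lt) (pow_pos hB 2)]
  have hε₂₀ : 0 ≤ ε₂ := hε₂ ▸ by positivity
  calc ‖E₁ + E₂‖ ≤ ‖E₁‖ + ‖E₂‖ := norm_add_le _ _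
    _ = ε₁ * ‖B‖ ^ 2 + ε₂ * ‖G‖ := by rw [hE₁, hε₂, div_mul_cancel₀ _ hG_pos.ne']
    _ ≤ ε₁ * ‖B‖ ^ 2 + ε₂ * ((1 + ε₁) * ‖B‖ ^ 2) := by gcongr
    _ = (ε₁ + (1 + ε₁) * ε₂) * ‖B‖ ^ 2 := by ring

section Gram

variable [DecidableEq m]

lemma sq_sub_mul_norm_sq_le_of_mul_norm_le (A : Matrix m n ℝ) (R : Matrix n n ℝ) {s : ℝ}
    (hs : 0 ≤ s) (hA : ∀ x, s * ‖x‖ ≤ ‖toEuclideanLin A x‖) (x : EuclideanSpace ℝ n) :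
    (s ^ 2 - ‖Rᵀ * R - Aᵀ * A‖) * ‖x‖ ^ 2 ≤ ‖toEuclideanLin R x‖ ^ 2 := by
  have hAx : (s * ‖x‖) ^ 2 ≤ ‖toEuclideanLin A x‖ ^ 2 := by gcongr; exact hA x
  have hΔ := (abs_le.mp (abs_inner_toEuclideanLin_self_le (Rᵀ * R - Aᵀ * A) x)).1
  rw [map_sub, LinearMap.sub_apply, inner_sub_right, ← norm_toEuclideanLin_sq,
    ← norm_toEuclideanLin_sq] at hΔ
  nlinarith

lemma l2_opNorm_one_sub_transpose_mul_self_le_of_gram (A Q : Matrix m n ℝ) (R : Matrix n n ℝ)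
    {s δ d : ℝ} (hs : 0 ≤ s) (hA : ∀ x, s * ‖x‖ ≤ ‖toEuclideanLin A x‖)
    (hδ : ‖Rᵀ * R - Aᵀ * A‖ ≤ δ) (hδs : δ < s ^ 2) (hd : ‖Rᵀ * R - (Q * R)ᵀ * (Q * R)‖ ≤ d) :
    ‖1 - Qᵀ * Q‖ ≤ d / (s ^ 2 - δ) := by
  have hc : 0 < s ^ 2 - δ := sub_pos.mpr hδs
  have hR : ∀ x, √(s ^ 2 - δ) * ‖x‖ ≤ ‖toEuclideanLin R x‖ := fun x => by
    rw [← sq_le_sq₀ (by positivity) (norm_nonneg _), mul_pow, Real.sq_sqrt hc.le]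
    exact (mul_le_mul_of_nonneg_right (by linarith) (sq_nonneg _)).trans
      (sq_sub_mul_norm_sq_le_of_mul_norm_le A R hs hA x)
  calc ‖1 - Qᵀ * Q‖ ≤ ‖Rᵀ * R - (Q * R)ᵀ * (Q * R)‖ / √(s ^ 2 - δ) ^ 2 :=
        l2_opNorm_one_sub_transpose_mul_self_le Q (Real.sqrt_pos.mpr hc) hR
    _ ≤ d / (s ^ 2 - δ) := by rw [Real.sq_sqrt hc.le]; gcongr

lemma l2_opNorm_add_sub_transpose_mul_self_le {A E : Matrix m n ℝ} {F : Matrix n n ℝ}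
    {εA φ : ℝ} (hE : ‖E‖ = εA * ‖A‖) (hF : ‖F‖ ≤ φ * ‖A + E‖ ^ 2) (hφ : 0 ≤ φ) :
    ‖(A + E)ᵀ * (A + E) + F - Aᵀ * A‖ ≤ (2 * εA + εA ^ 2 + (1 + εA) ^ 2 * φ) * ‖A‖ ^ 2 := by
  have hAE : ‖A + E‖ ≤ (1 + εA) * ‖A‖ := by grw [norm_add_le, hE]; linarith
  rw [add_sub_right_comm]
  calc _ ≤ 2 * ‖A‖ * ‖E‖ + ‖E‖ ^ 2 + φ * ‖A + E‖ ^ 2 := by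
        grw [norm_add_le, l2_opNorm_transpose_mul_self_add_sub_le, hF]
    _ ≤ 2 * ‖A‖ * (εA * ‖A‖) + (εA * ‖A‖) ^ 2 + φ * ((1 + εA) * ‖A‖) ^ 2 := by
        rw [hE]; gcongr
    _ = _ := by ring

lemma l2_opNorm_sub_transpose_mul_self_add_le {B E₃ : Matrix m n ℝ} {F : Matrix n n ℝ}
    {ε₃ φ : ℝ} (hE₃ : ‖E₃‖ = ε₃ * ‖B‖) (hF : ‖F‖ ≤ φ * ‖B‖ ^ 2) :
    ‖Bᵀ * B + F - (B + E₃)ᵀ * (B + E₃)‖ ≤ (φ + 2 * ε₃ + ε₃ ^ 2) * ‖B‖ ^ 2 := by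
  rw [show Bᵀ * B + F - (B + E₃)ᵀ * (B + E₃) = F - ((B + E₃)ᵀ * (B + E₃) - Bᵀ * B) by abel]
  calc _ ≤ φ * ‖B‖ ^ 2 + (2 * ‖B‖ * ‖E₃‖ + ‖E₃‖ ^ 2) := by
        grw [norm_sub_le, l2_opNorm_transpose_mul_self_add_sub_le, hF]
    _ = _ := by rw [hE₃]; ring

end Gram

end Matrix

section SingularValues

variable {m n : ℕ} (A : Matrix (Fin m) (Fin n) ℝ)

lemma sq_singularValues (i : Fin n) :
    singularValues A i ^ 2 = ((isHermitian_transpose_mul_self A).eigenvalues ∘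
      Tuple.sort (isHermitian_transpose_mul_self A).eigenvalues) i.rev :=
  Real.sq_sqrt (eigenvalues_transpose_mul_self_nonneg A _)

lemma sigmaMin_nonneg : 0 ≤ sigmaMin A := by
  unfold sigmaMin; split_ifs
  · exact Real.sqrt_nonneg _
  · exact zero_le_one

lemma sq_sigmaMin_le_eigenvalues (hn : 0 < n) (j : Fin n) :
    sigmaMin A ^ 2 ≤ (isHermitian_transpose_mul_self A).eigenvalues j := by
  have hrev : (⟨n - 1, Nat.sub_lt hn Nat.one_pos⟩ : Fin n).rev = ⟨0, hn⟩ :=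
    Fin.ext (by simp only [Fin.val_rev]; omega)
  rw [sigmaMin, dif_pos hn, sq_singularValues, hrev]
  exact Tuple.comp_sort_zero_le _ hn j

lemma eigenvalues_le_sq_singularValues_zero (hn : 0 < n) (j : Fin n) :
    (isHermitian_transpose_mul_self A).eigenvalues j ≤ singularValues A ⟨0, hn⟩ ^ 2 := by
  have hrev : (⟨0, hn⟩ : Fin n).rev = ⟨n - 1, Nat.sub_lt hn Nat.one_pos⟩ :=
    Fin.ext (by simp only [Fin.val_rev])
  rw [sq_singularValues, hrev]
  exact Tuple.le_comp_sort_last _ hn j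

lemma sigmaMin_mul_norm_le (hn : 0 < n) (x : EuclideanSpace ℝ (Fin n)) :
    sigmaMin A * ‖x‖ ≤ ‖toEuclideanLin A x‖ := by
  have := sigmaMin_nonneg A
  rw [← sq_le_sq₀ (by positivity) (norm_nonneg _), mul_pow, norm_toEuclideanLin_sq]
  exact (isHermitian_transpose_mul_self A).mul_norm_sq_le_inner_toEuclideanLin_self
    (sq_sigmaMin_le_eigenvalues A hn) x

lemma l2_opNorm_eq_singularValues_zero (hn : 0 < n) : ‖A‖ = singularValues A ⟨0, hn⟩ := by
  set hH := isHermitian_transpose_mul_self A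
  have hσ : 0 ≤ singularValues A ⟨0, hn⟩ := Real.sqrt_nonneg _
  refine le_antisymm (l2_opNorm_le_bound A hσ fun x => ?_) ?_
  · rw [← sq_le_sq₀ (norm_nonneg _) (by positivity), mul_pow, norm_toEuclideanLin_sq]
    exact hH.inner_toEuclideanLin_self_le_mul_norm_sq (eigenvalues_le_sq_singularValues_zero A hn) x
  · set v := hH.eigenvectorBasis (Tuple.sort hH.eigenvalues (Fin.rev ⟨0, hn⟩))
    have hv : ‖v‖ = 1 := hH.eigenvectorBasis.norm_eq_one _
    rw [← sq_le_sq₀ hσ (norm_nonneg _), sq_singularValues]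
    calc _ = ‖toEuclideanLin A v‖ ^ 2 := by
          rw [norm_toEuclideanLin_sq, hH.toEuclideanLin_eigenvectorBasis, real_inner_smul_right,
            real_inner_self_eq_norm_sq, hv]
          simp
      _ ≤ (‖A‖ * ‖v‖) ^ 2 := by gcongr; exact l2_opNorm_toEuclideanLin_le A v
      _ = ‖A‖ ^ 2 := by rw [hv, mul_one]

lemma sigmaMin_le_l2_opNorm (hn : 0 < n) : sigmaMin A ≤ ‖A‖ := by
  rw [← sq_le_sq₀ (sigmaMin_nonneg A) (norm_nonneg _), l2_opNorm_eq_singularValues_zero A hn]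
  exact (sq_sigmaMin_le_eigenvalues A hn ⟨0, hn⟩).trans
    (eigenvalues_le_sq_singularValues_zero A hn ⟨0, hn⟩)

lemma sigmaMin_pos (hA : A.rank = n) : 0 < sigmaMin A := by
  rcases Nat.eq_zero_or_pos n with rfl | hn
  · simp [sigmaMin]
  have hpd := PosDef.conjTranspose_mul_self A <|
    mulVec_injective_of_rank_eq_card A (hA.trans (Fintype.card_fin n).symm)
  rw [conjTranspose_eq_transpose_of_trivial] at hpd
  rw [sigmaMin, dif_pos hn, singularValues]
  exact Real.sqrt_pos.mpr (hpd.eigenvalues_pos _)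

lemma kappa_eq_l2_opNorm_div_sigmaMin (hn : 0 < n) : kappa A = ‖A‖ / sigmaMin A := by
  rw [kappa, dif_pos hn, sigmaMin, dif_pos hn, l2_opNorm_eq_singularValues_zero A hn]

end SingularValues

lemma cholQR_backward_error_le {m n : Type*} [Fintype m] [Fintype n] [DecidableEq m]
    [DecidableEq n] {A E E₃ Q : Matrix m n ℝ} {E₁ E₂ G R : Matrix n n ℝ}
    {εA ε₁ ε₂ ε₃ γ₁ γ₂ : ℝ} (hA : 0 < ‖A‖) (hG : G = (A + E)ᵀ * (A + E) + E₁)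
    (hchol : G + E₂ = Rᵀ * R) (hQ : Q * R = A + E + E₃) (hεA : εA = ‖E‖ / ‖A‖)
    (hε₁ : ε₁ = ‖E₁‖ / ‖A + E‖ ^ 2) (hε₂ : ε₂ = ‖E₂‖ / ‖G‖) (hε₃ : ε₃ = ‖E₃‖ / ‖A + E‖)
    (hγ₁ : γ₁ = (1 + εA) ^ 2 * (ε₁ + (1 + ε₁) * ε₂ + 2 * ε₃ + ε₃ ^ 2))
    (hγ₂ : γ₂ = 2 * εA + εA ^ 2 + (1 + εA) ^ 2 * (ε₁ + (1 + ε₁) * ε₂)) (hγ₂_lt : γ₂ < 1) :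
    ‖Rᵀ * R - Aᵀ * A‖ ≤ ‖A‖ ^ 2 * γ₂ ∧ ‖Rᵀ * R - (Q * R)ᵀ * (Q * R)‖ ≤ ‖A‖ ^ 2 * γ₁ := by
  have hεA₀ : 0 ≤ εA := hεA ▸ by positivity
  have hε₁₀ : 0 ≤ ε₁ := hε₁ ▸ by positivity
  have hε₂₀ : 0 ≤ ε₂ := hε₂ ▸ by positivity
  have hεA_lt : εA < 1 := by
    nlinarith [show 0 ≤ (1 + εA) ^ 2 * (ε₁ + (1 + ε₁) * ε₂) by positivity]
  have hε₁_lt : ε₁ < 1 := by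
    nlinarith [show 0 ≤ (2 * εA + εA ^ 2) * ε₁ + (1 + εA) ^ 2 * (1 + ε₁) * ε₂ by positivity]
  have hE : ‖E‖ = εA * ‖A‖ := by rw [hεA, div_mul_cancel₀ _ hA.ne']
  have hAE : ‖A + E‖ ≤ (1 + εA) * ‖A‖ := by grw [norm_add_le, hE]; linarith
  have hAE_pos : 0 < ‖A + E‖ := by
    have := norm_sub_norm_le A (-E)
    rw [norm_neg, sub_neg_eq_add, hE] at this
    nlinarith [mul_pos (sub_pos.mpr hεA_lt) hA]
  have hE₃ : ‖E₃‖ = ε₃ * ‖A + E‖ := by rw [hε₃, div_mul_cancel₀ _ hAE_pos.ne']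
  have hF := l2_opNorm_add_le_of_relErr hG hAE_pos hε₁ hε₂ hε₁_lt
  have hRR : Rᵀ * R = (A + E)ᵀ * (A + E) + (E₁ + E₂) := by rw [← hchol, hG, add_assoc]
  refine ⟨?_, ?_⟩
  · rw [hRR, hγ₂, mul_comm]
    exact l2_opNorm_add_sub_transpose_mul_self_le hE hF (by positivity)
  · rw [hRR, hQ]
    calc _ ≤ (ε₁ + (1 + ε₁) * ε₂ + 2 * ε₃ + ε₃ ^ 2) * ‖A + E‖ ^ 2 :=
          l2_opNorm_sub_transpose_mul_self_add_le hE₃ hF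
      _ ≤ (ε₁ + (1 + ε₁) * ε₂ + 2 * ε₃ + ε₃ ^ 2) * ((1 + εA) * ‖A‖) ^ 2 := by
          have : 0 ≤ ε₃ := hε₃ ▸ by positivity
          gcongr
      _ = ‖A‖ ^ 2 * γ₁ := by rw [hγ₁]; ring

theorem stmt_4_general {m n : ℕ} (A E E₃ Qhat : Matrix (Fin m) (Fin n) ℝ)
    (E₁ E₂ Ghat Rhat : Matrix (Fin n) (Fin n) ℝ)
    (hA : A.rank = n)
    (hG : Ghat = (A + E)ᵀ * (A + E) + E₁)
    (εA ε₁ ε₂ ε₃ γ₁ γ₂ : ℝ)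
    (hεA : εA = spec E / spec A)
    (hε₁ : ε₁ = spec E₁ / spec (A + E) ^ 2)
    (hε₂ : ε₂ = spec E₂ / spec Ghat)
    (hε₃ : ε₃ = spec E₃ / spec (A + E))
    (hγ₁ : γ₁ = (1 + εA) ^ 2 * (ε₁ + (1 + ε₁) * ε₂ + 2 * ε₃ + ε₃ ^ 2))
    (hγ₂ : γ₂ = 2 * εA + εA ^ 2 + (1 + εA) ^ 2 * (ε₁ + (1 + ε₁) * ε₂))
    (hsmall : kappa A ^ 2 * γ₂ < 1)
    (hchol : Ghat + E₂ = Rhatᵀ * Rhat)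
    (hQ : Qhat * Rhat = (A + E) + E₃) :
    spec ((1 : Matrix (Fin n) (Fin n) ℝ) - Qhatᵀ * Qhat) ≤
      kappa A ^ 2 * γ₁ / (1 - kappa A ^ 2 * γ₂) := by
  simp only [spec_eq_l2_opNorm] at hεA hε₁ hε₂ hε₃ ⊢
  rcases Nat.eq_zero_or_pos n with rfl | hn
  · have hγ₁₀ : 0 ≤ γ₁ := by rw [hγ₁, hεA, hε₁, hε₂, hε₃]; positivity
    have hκ : kappa A = 1 := dif_neg (lt_irrefl 0)
    rw [hκ, one_pow, one_mul] at hsmall ⊢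
    rw [Subsingleton.elim (1 - Qhatᵀ * Qhat) 0, norm_zero]
    exact div_nonneg hγ₁₀ (by linarith)
  have hs : 0 < sigmaMin A := sigmaMin_pos A hA
  have hsA : sigmaMin A ≤ ‖A‖ := sigmaMin_le_l2_opNorm A hn
  have hκ : kappa A = ‖A‖ / sigmaMin A := kappa_eq_l2_opNorm_div_sigmaMin A hn
  have hδs : ‖A‖ ^ 2 * γ₂ < sigmaMin A ^ 2 := by
    rwa [hκ, div_pow, div_mul_eq_mul_div, div_lt_one (by positivity)] at hsmall
  have hγ₂_lt : γ₂ < 1 := by nlinarith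
  obtain ⟨hΔ, hD⟩ := cholQR_backward_error_le (hs.trans_le hsA) hG hchol hQ hεA hε₁ hε₂ hε₃
    hγ₁ hγ₂ hγ₂_lt
  calc ‖1 - Qhatᵀ * Qhat‖ ≤ ‖A‖ ^ 2 * γ₁ / (sigmaMin A ^ 2 - ‖A‖ ^ 2 * γ₂) :=
        l2_opNorm_one_sub_transpose_mul_self_le_of_gram A Qhat Rhat hs.le
          (sigmaMin_mul_norm_le A hn) hΔ hδs hD
    _ = kappa A ^ 2 * γ₁ / (1 - kappa A ^ 2 * γ₂) := by rw [hκ]; field_simp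

/-- Theorem 2.2, deviation from orthonormality. -/
theorem stmt_4 {m n : ℕ} (A E E₃ Qhat : Matrix (Fin m) (Fin n) ℝ)
    (E₁ E₂ Ghat Rhat : Matrix (Fin n) (Fin n) ℝ)
    (hA : A.rank = n) (hE₁ : E₁ᵀ = E₁) (hE₂ : E₂ᵀ = E₂)
    (hG : Ghat = (A + E)ᵀ * (A + E) + E₁)
    (εA ε₁ ε₂ ε₃ γ₁ γ₂ : ℝ)
    (hεA : εA = spec E / spec A)
    (hε₁ : ε₁ = spec E₁ / spec (A + E) ^ 2)
    (hε₂ : ε₂ = spec E₂ / spec Ghat)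
    (hε₃ : ε₃ = spec E₃ / spec (A + E))
    (hγ₁ : γ₁ = (1 + εA) ^ 2 * (ε₁ + (1 + ε₁) * ε₂ + 2 * ε₃ + ε₃ ^ 2))
    (hγ₂ : γ₂ = 2 * εA + εA ^ 2 + (1 + εA) ^ 2 * (ε₁ + (1 + ε₁) * ε₂))
    (hsmall : kappa A ^ 2 * γ₂ < 1)
    (hchol : Ghat + E₂ = Rhatᵀ * Rhat)
    (hQ : Qhat * Rhat = (A + E) + E₃) :
    spec ((1 : Matrix (Fin n) (Fin n) ℝ) - Qhatᵀ * Qhat) ≤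
      kappa A ^ 2 * γ₁ / (1 - kappa A ^ 2 * γ₂) :=
  stmt_4_general A E E₃ Qhat E₁ E₂ Ghat Rhat hA hG εA ε₁ ε₂ ε₃ γ₁ γ₂ hεA hε₁ hε₂ hε₃ hγ₁ hγ₂ hsmall
    hchol hQ
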